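/- Let f be a Schwartz function on ℝⁿ and define h(x) := (x₁² ⋯ xₙ²) f(x), which is again Schwartz. Then F_h(α) = b(α−μ₀) F_f(α+1) for all α ∈ ℂ, where b(z) := ∏_{j=1}^n (z + k(j−1)). (Equivalently, Δ(x²)·ζ_α = b(α−μ₀) ζ_{α+1} as tempered distributions.) -/

import Mathlib

/-!
Multiplying by `x₁² ⋯ xₙ²` raises each exponent `2α - 2μ₀ - 1` by `2`, so `𝒵(h; α) = 𝒵(f; α + 1)`,
while `Γ(s + 1) = s Γ(s)` gives `Γ_n(α + 1) = ∏_j (α - k j) · Γ_n(α)`, and reversing `j ↦ n - 1 - j`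
turns that product into `b(α - μ₀)`. This proves the identity for `Re α > μ₀`; both sides are
entire, so it holds on all of `ℂ` by the identity theorem.
-/

noncomputable section

open MeasureTheory Real

/-- The type-A weight `ω^A(x) = ∏_{i<j} |x_i - x_j|^{2k}`. -/
def weightA (n : ℕ) (k : ℝ) (x : Fin n → ℝ) : ℝ :=
  ∏ i : Fin n, ∏ j ∈ Finset.Ioi i, |x i - x j| ^ (2 * k)

/-- The generalized gamma function
`Γ_n(α) = c_A (2π)^{-n/2} ∏_{j=1}^n Γ(α - k(j-1))`, with
`c_A = ∫_{ℝⁿ} e^{-|x|²/2} ω^A(x) dx`. -/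
def GammaN (n : ℕ) (k : ℝ) (α : ℂ) : ℂ :=
  ((∫ x : Fin n → ℝ, Real.exp (-(∑ i, x i ^ 2) / 2) * weightA n k x : ℝ) : ℂ) *
    ((2 * π : ℝ) : ℂ) ^ (-(n : ℂ) / 2) *
    ∏ j : Fin n, Complex.Gamma (α - (k : ℂ) * (j : ℕ))

/-- The zeta integral `𝒵(f;α)`. -/
def zetaIntegral (n : ℕ) (k μ₀ : ℝ)
    (f : SchwartzMap (Fin n → ℝ) ℂ) (α : ℂ) : ℂ :=
  ∫ x : Fin n → ℝ, f x *
    ((∏ i, ((|x i| : ℝ) : ℂ) ^ (2 * α - 2 * (μ₀ : ℂ) - 1)) *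
      ((∏ i : Fin n, ∏ j ∈ Finset.Ioi i, |x i ^ 2 - x j ^ 2| ^ (2 * k) : ℝ) : ℂ))

theorem Differentiable.eq_of_eqOn_re_gt {E : Type*} [NormedAddCommGroup E] [NormedSpace ℂ E]
    [CompleteSpace E] {f g : ℂ → E} (hf : Differentiable ℂ f) (hg : Differentiable ℂ g) {c : ℝ}
    (hfg : ∀ z : ℂ, c < z.re → f z = g z) : f = g := by
  have hopen : IsOpen {z : ℂ | c < z.re} := isOpen_lt continuous_const Complex.continuous_re
  have hmem : (c + 1 : ℂ) ∈ {z : ℂ | c < z.re} := by simp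
  refine (Complex.analyticOnNhd_univ_iff_differentiable.2 hf).eq_of_eventuallyEq
    (Complex.analyticOnNhd_univ_iff_differentiable.2 hg) (z₀ := c + 1) ?_
  filter_upwards [hopen.mem_nhds hmem] with z hz using hfg z hz

-- At `t = 0` both sides vanish, which is where `s + 2 ≠ 0` enters (`0 ^ 0 = 1`).
theorem ofReal_abs_cpow_add_two (t : ℝ) {s : ℂ} (hs : s + 2 ≠ 0) :
    ((|t| : ℝ) : ℂ) ^ (s + 2) = ((t ^ 2 : ℝ) : ℂ) * ((|t| : ℝ) : ℂ) ^ s := by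
  rcases eq_or_ne t 0 with rfl | ht
  · simp [Complex.zero_cpow hs]
  · have habs : ((|t| : ℝ) : ℂ) ≠ 0 := by exact_mod_cast abs_ne_zero.2 ht
    rw [Complex.cpow_add _ _ habs, Complex.cpow_two, mul_comm, ← Complex.ofReal_pow, sq_abs]

theorem zetaIntegral_of_eq_prod_sq_mul {n : ℕ} {k μ₀ : ℝ} {f h : SchwartzMap (Fin n → ℝ) ℂ}
    (hh : ∀ x : Fin n → ℝ, h x = ((∏ i, x i ^ 2 : ℝ) : ℂ) * f x) {α : ℂ}
    (hα : 2 * μ₀ - 1 < 2 * α.re) :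
    zetaIntegral n k μ₀ h α = zetaIntegral n k μ₀ f (α + 1) := by
  have hs : 2 * α - 2 * (μ₀ : ℂ) - 1 + 2 ≠ 0 := by
    intro h0
    have hre := congrArg Complex.re h0
    simp only [Complex.add_re, Complex.sub_re, Complex.mul_re, Complex.ofReal_re,
      Complex.ofReal_im, Complex.zero_re] at hre
    norm_num at hre
    linarith
  unfold zetaIntegral
  congr 1
  ext x
  rw [hh x, show 2 * (α + 1) - 2 * (μ₀ : ℂ) - 1 = 2 * α - 2 * μ₀ - 1 + 2 by ring]
  simp only [ofReal_abs_cpow_add_two _ hs, Finset.prod_mul_distrib, Complex.ofReal_prod]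
  ring

theorem GammaN_add_one {n : ℕ} {k : ℝ} {α : ℂ} (hα : ∀ j : Fin n, α - k * (j : ℕ) ≠ 0) :
    GammaN n k (α + 1) = (∏ j : Fin n, (α - k * (j : ℕ))) * GammaN n k α := by
  have hstep (j : Fin n) : Complex.Gamma (α + 1 - k * (j : ℕ))
      = (α - k * (j : ℕ)) * Complex.Gamma (α - k * (j : ℕ)) := by
    rw [add_sub_right_comm]
    exact Complex.Gamma_add_one _ (hα j)
  simp only [GammaN, hstep, Finset.prod_mul_distrib]
  ring

theorem sub_ofReal_mul_natCast_ne_zero {n : ℕ} {k : ℝ} (hk : 0 ≤ k) {α : ℂ}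
    (hα : k * (n - 1) < α.re) (j : Fin n) : α - k * (j : ℕ) ≠ 0 := by
  intro h0
  have hre := congrArg Complex.re h0
  simp only [Complex.sub_re, Complex.mul_re, Complex.ofReal_re, Complex.ofReal_im,
    Complex.natCast_re, Complex.natCast_im, Complex.zero_re] at hre
  have hj : ((j : ℕ) : ℝ) + 1 ≤ n := by exact_mod_cast j.is_lt
  nlinarith

theorem prod_sub_add_mul_natCast_eq_prod_sub (n : ℕ) (k : ℝ) (β : ℂ) :
    ∏ j : Fin n, (β - ((k * (n - 1) : ℝ) : ℂ) + k * (j : ℕ)) = ∏ j : Fin n, (β - k * (j : ℕ)) := by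
  refine Fintype.prod_equiv Fin.revPerm _ _ fun j => ?_
  have hj : (j : ℕ) + 1 ≤ n := j.is_lt
  rw [Fin.revPerm_apply, Fin.val_rev, Nat.cast_sub hj]
  push_cast
  ring

theorem zeta_distribution_mul_delta_sq_general
    (n : ℕ) (k : ℝ) (hk : 0 ≤ k)
    (μ₀ : ℝ) (hμ₀ : μ₀ = k * (n - 1))
    (FF : SchwartzMap (Fin n → ℝ) ℂ → ℂ → ℂ)
    (hFF : ∀ f, Differentiable ℂ (FF f) ∧
      ∀ α : ℂ, μ₀ < α.re → FF f α = zetaIntegral n k μ₀ f α / GammaN n k α)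
    (f h : SchwartzMap (Fin n → ℝ) ℂ)
    (hh : ∀ x : Fin n → ℝ, h x = ((∏ i, x i ^ 2 : ℝ) : ℂ) * f x) :
    ∀ α : ℂ, FF h α
      = (∏ j : Fin n, (α - (μ₀ : ℂ) + (k : ℂ) * (j : ℕ))) * FF f (α + 1) := by
  subst hμ₀
  refine congrFun ((hFF h).1.eq_of_eqOn_re_gt (c := k * (n - 1)) ?_ fun α hα => ?_)
  · exact (Differentiable.fun_finsetProd fun j _ => by fun_prop).mul
      ((hFF f).1.comp (differentiable_id.add_const 1))
  · have hfactor : ∏ j : Fin n, (α - k * (j : ℕ)) ≠ 0 :=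
      Finset.prod_ne_zero_iff.2 fun j _ => sub_ofReal_mul_natCast_ne_zero hk hα j
    have hα1 : k * (n - 1) < (α + 1).re := by simp only [Complex.add_re, Complex.one_re]; linarith
    rw [(hFF h).2 α hα, (hFF f).2 (α + 1) hα1, zetaIntegral_of_eq_prod_sq_mul hh (by linarith),
      GammaN_add_one fun j => sub_ofReal_mul_natCast_ne_zero hk hα j,
      prod_sub_add_mul_natCast_eq_prod_sub, mul_div_assoc', mul_div_mul_left _ _ hfactor]

/-- in terms of the entire extensions `F_f` of `α ↦ 𝒵(f;α)/Γ_n(α)`, if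
`h(x) = (x₁²⋯xₙ²) f(x)` then `F_h(α) = b(α-μ₀) F_f(α+1)` for all `α ∈ ℂ`, with
`b(z) = ∏_{j=1}^n (z + k(j-1))`; i.e. `Δ(x²)·ζ_α = b(α-μ₀) ζ_{α+1}`. -/
theorem zeta_distribution_mul_delta_sq
    (n : ℕ) (hn : 1 ≤ n) (k : ℝ) (hk : 0 ≤ k)
    (μ₀ : ℝ) (hμ₀ : μ₀ = k * (n - 1))
    (FF : SchwartzMap (Fin n → ℝ) ℂ → ℂ → ℂ)
    (hFF : ∀ f, Differentiable ℂ (FF f) ∧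
      ∀ α : ℂ, μ₀ < α.re → FF f α = zetaIntegral n k μ₀ f α / GammaN n k α)
    (f h : SchwartzMap (Fin n → ℝ) ℂ)
    (hh : ∀ x : Fin n → ℝ, h x = ((∏ i, x i ^ 2 : ℝ) : ℂ) * f x) :
    ∀ α : ℂ, FF h α
      = (∏ j : Fin n, (α - (μ₀ : ℂ) + (k : ℂ) * (j : ℕ))) * FF f (α + 1) :=
  zeta_distribution_mul_delta_sq_general n k hk μ₀ hμ₀ FF hFF f h hh
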